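/- arXiv:1801.07830 — 2 statements merged into one kernel-verified Lean document; each statement's English description precedes it below -/
import Mathlib

section
/- Let S be an α-stable subordinator with index α ∈ (0,1). If θ ∈ [1/α, ∞), then almost surely, for every T > 0, the Lebesgue–Stieltjes integral ∫_0^T t^{-θ} dS_t is infinite. -/
open MeasureTheory ProbabilityTheory Filter Set
open scoped ENNReal NNReal Topology

/-- An `α`-stable subordinator on a probability space `Ω`: a real-valued process with
`S 0 = 0`, stationary independent increments, almost surely nondecreasing right-continuous
sample paths, and Laplace transform `E[exp (-λ S t)] = exp (-t λ^α)`.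
The process is extended by `0` to nonpositive times, so that the a.s. path regularity on
`[0, ∞)` can be expressed as regularity of the extended path on all of `ℝ`. -/
structure StableSubordinator (Ω : Type*) [MeasureSpace Ω] [IsProbabilityMeasure (ℙ : Measure Ω)]
    (α : ℝ) where
  S : ℝ → Ω → ℝ
  measurable : ∀ t : ℝ, Measurable (S t)
  zero_of_nonpos : ∀ t : ℝ, t ≤ 0 → ∀ ω, S t ω = 0
  path : ∀ᵐ ω : Ω, Monotone (fun t => S t ω) ∧
    ∀ x : ℝ, ContinuousWithinAt (fun t => S t ω) (Set.Ici x) x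
  indep_increments : ∀ (n : ℕ) (t : Fin (n + 1) → ℝ), Monotone t → (∀ i, 0 ≤ t i) →
    iIndepFun (m := fun _ : Fin n => Real.measurableSpace)
      (fun i ω => S (t i.succ) ω - S (t i.castSucc) ω) ℙ
  stationary_increments : ∀ s t : ℝ, 0 ≤ s → s ≤ t →
    Measure.map (fun ω => S t ω - S s ω) ℙ = Measure.map (S (t - s)) ℙ
  laplace : ∀ lam : ℝ, 0 < lam → ∀ t : ℝ, 0 ≤ t →
    ∫ ω, Real.exp (-lam * S t ω) ∂ℙ = Real.exp (-t * lam ^ α)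

open Classical in
/-- The Lebesgue–Stieltjes measure induced by a nondecreasing right-continuous path
(junk value `0` if the path is not such). -/
noncomputable def pathMeasure (f : ℝ → ℝ) : Measure ℝ :=
  if h : Monotone f ∧ ∀ x : ℝ, ContinuousWithinAt f (Set.Ici x) x then
    StieltjesFunction.measure ⟨f, h.1, h.2⟩ else 0

/-! Along the dyadic times `u n = 2⁻¹ ^ n`, the increments `S (u n) - S (u (n+1))` are
independent and distributed as `S (u n / 2)`; by Chernoff's bound applied to the Laplace
transform, each exceeds `(u n / 2) ^ (1/α) / 2` with probability at least `1 - e^(-1/2)`.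
By the second Borel–Cantelli lemma this happens almost surely for infinitely many `n`, and each
such `n` contributes at least `u n ^ (-θ) * (u n / 2) ^ (1/α) / 2 ≥ 2 ^ (-1/α) / 2` to the
integral over `(u (n+1), u n]`, because `θ ≥ 1/α`. These intervals are disjoint and eventually
inside `(0, T]`. -/

open scoped Function

theorem MeasureTheory.measure_eq_top_of_frequently_le {β : Type*} [MeasurableSpace β]
    {ν : Measure β} {s : ℕ → Set β} (hs : ∀ n, MeasurableSet (s n))
    (hd : Pairwise (Disjoint on s)) {A : Set β} {C : ℝ≥0∞} (hC : C ≠ 0)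
    (h : ∃ᶠ n in atTop, s n ⊆ A ∧ C ≤ ν (s n)) :
    ν A = ∞ := by
  set G := {n | s n ⊆ A ∧ C ≤ ν (s n)}
  have : Infinite G := (Nat.frequently_atTop_iff_infinite.1 h).to_subtype
  refine top_unique ?_
  calc ∞ = ∑' _ : G, C := (ENNReal.tsum_const_eq_top_of_ne_zero hC).symm
    _ ≤ ∑' n : G, ν (s n) := ENNReal.tsum_le_tsum fun n => n.2.2
    _ ≤ ν (⋃ n : G, s n) := tsum_meas_le_meas_iUnion_of_disjoint ν (fun n => hs n)
        (hd.comp_of_injective Subtype.val_injective)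
    _ ≤ ν A := measure_mono (iUnion_subset fun n => n.2.1)

theorem MeasureTheory.setLIntegral_Ioc_zero_eq_top_of_frequently_le {μ : Measure ℝ}
    {g : ℝ → ℝ≥0∞} (hg : AntitoneOn g (Ioi 0)) {u : ℕ → ℝ} (hu : Antitone u) (hu_pos : ∀ n, 0 < u n)
    (hu_lim : Tendsto u atTop (𝓝 0)) {C : ℝ≥0∞} (hC : C ≠ 0)
    (h : ∃ᶠ n in atTop, C ≤ g (u n) * μ (Ioc (u (n + 1)) (u n))) {T : ℝ} (hT : 0 < T) :
    ∫⁻ t in Ioc 0 T, g t ∂μ = ∞ := by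
  rw [← withDensity_apply _ measurableSet_Ioc]
  refine measure_eq_top_of_frequently_le (fun _ => measurableSet_Ioc)
    (by simpa only [Order.succ_eq_add_one] using hu.pairwise_disjoint_on_Ioc_succ) hC ?_
  refine (h.and_eventually (hu_lim.eventually (gt_mem_nhds hT))).mono ?_
  rintro n ⟨hn, hnT⟩
  refine ⟨Ioc_subset_Ioc (hu_pos _).le hnT.le, hn.trans ?_⟩
  rw [withDensity_apply _ measurableSet_Ioc, ← setLIntegral_const]
  exact setLIntegral_mono' measurableSet_Ioc fun t ht =>
    hg ((hu_pos _).trans ht.1) (hu_pos n) ht.2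

theorem ProbabilityTheory.iIndepFun.iIndepSet_preimage {Ω ι β : Type*} [MeasurableSpace Ω]
    [MeasurableSpace β] {μ : Measure Ω} {f : ι → Ω → β} (h : iIndepFun f μ)
    (hf : ∀ i, Measurable (f i)) {A : ι → Set β} (hA : ∀ i, MeasurableSet (A i)) :
    iIndepSet (fun i => f i ⁻¹' A i) μ :=
  (iIndepSet_iff_meas_biInter fun i => hf i (hA i)).2 fun s =>
    h.measure_inter_preimage_eq_mul s fun i _ => hA i

theorem ProbabilityTheory.ae_frequently_mem_of_iIndepSet {Ω : Type*} [MeasurableSpace Ω]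
    {μ : Measure Ω} {s : ℕ → Set Ω} (hsm : ∀ n, MeasurableSet (s n)) (hs : iIndepSet s μ)
    (h : ∑' n, μ (s n) = ∞) :
    ∀ᵐ ω ∂μ, ∃ᶠ n in atTop, ω ∈ s n := by
  have := hs.isProbabilityMeasure
  simp_rw [← mem_limsup_iff_frequently_mem]
  rw [ae_mem_iff_measure_eq (MeasurableSet.measurableSet_limsup hsm).nullMeasurableSet,
    measure_univ]
  exact measure_limsup_eq_one hsm hs h

theorem pathMeasure_Ioc {f : ℝ → ℝ} (hf : Monotone f ∧ ∀ x, ContinuousWithinAt f (Ici x) x)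
    (a b : ℝ) : pathMeasure f (Ioc a b) = ENNReal.ofReal (f b - f a) := by
  rw [pathMeasure, dif_pos hf, StieltjesFunction.measure_Ioc]

theorem rpow_le_rpow_neg_mul_mul_rpow {h a θ c : ℝ} (h0 : 0 < h) (h1 : h ≤ 1) (ha : a ≤ θ)
    (hc : 0 ≤ c) : c ^ a ≤ h ^ (-θ) * (c * h) ^ a := by
  rw [Real.mul_rpow hc h0.le, mul_left_comm, ← Real.rpow_add h0]
  exact le_mul_of_one_le_right (Real.rpow_nonneg hc a)
    (Real.one_le_rpow_of_pos_of_le_one_of_nonpos h0 h1 (by linarith))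

namespace StableSubordinator

variable {Ω : Type*} [MeasureSpace Ω] [IsProbabilityMeasure (ℙ : Measure Ω)] {α : ℝ}
  (X : StableSubordinator Ω α)

/-- Chernoff's bound at the scale-invariant parameter `λ = h ^ (-1/α)`. -/
theorem measureReal_S_le_mul_rpow_le_exp (hα : α ≠ 0) {h : ℝ} (hh : 0 < h) (c : ℝ) :
    (ℙ : Measure Ω).real {ω | X.S h ω ≤ c * h ^ α⁻¹} ≤ Real.exp (c - 1) := by
  have hlam : 0 < h ^ (-α⁻¹) := Real.rpow_pos_of_pos hh _
  have hlap := X.laplace _ hlam h hh.le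
  have hint : Integrable (fun ω => Real.exp (-h ^ (-α⁻¹) * X.S h ω)) ℙ :=
    -- a non-integrable function would have Bochner integral `0`
    Integrable.of_integral_ne_zero (hlap ▸ (Real.exp_pos _).ne')
  calc _ ≤ Real.exp (-(-h ^ (-α⁻¹)) * (c * h ^ α⁻¹)) * mgf (X.S h) ℙ (-h ^ (-α⁻¹)) :=
        measure_le_le_exp_mul_mgf _ (neg_nonpos.2 hlam.le) hint
    _ = Real.exp (c - 1) := by
        have hcancel : h ^ (-α⁻¹) * h ^ α⁻¹ = 1 := by rw [← Real.rpow_add hh]; simp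
        have hpow : (h ^ (-α⁻¹)) ^ α = h⁻¹ := by
          rw [← Real.rpow_mul hh.le, neg_mul, inv_mul_cancel₀ hα, Real.rpow_neg_one]
        rw [mgf, hlap, ← Real.exp_add, hpow]
        congr 1
        linear_combination c * hcancel - mul_inv_cancel₀ hh.ne'

theorem one_sub_exp_le_measureReal_increment (hα : α ≠ 0) {s t : ℝ} (hs : 0 ≤ s) (hst : s < t)
    (c : ℝ) :
    1 - Real.exp (c - 1) ≤
      (ℙ : Measure Ω).real {ω | c * (t - s) ^ α⁻¹ < X.S t ω - X.S s ω} := by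
  have hmeas : Measurable fun ω => X.S t ω - X.S s ω := (X.measurable t).sub (X.measurable s)
  calc 1 - Real.exp (c - 1)
        ≤ 1 - (ℙ : Measure Ω).real {ω | X.S (t - s) ω ≤ c * (t - s) ^ α⁻¹} := by
        gcongr
        exact X.measureReal_S_le_mul_rpow_le_exp hα (sub_pos.2 hst) c
    _ = (ℙ : Measure Ω).real (X.S (t - s) ⁻¹' Ioi (c * (t - s) ^ α⁻¹)) := by
        rw [← probReal_compl_eq_one_sub (measurableSet_le (X.measurable _) measurable_const)]
        congr 1
        ext ω
        simp
    _ = ((ℙ : Measure Ω).map fun ω => X.S t ω - X.S s ω).real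
          (Ioi (c * (t - s) ^ α⁻¹)) := by
        rw [X.stationary_increments s t hs hst.le,
          map_measureReal_apply (X.measurable _) measurableSet_Ioi]
    _ = _ := map_measureReal_apply hmeas measurableSet_Ioi

theorem iIndepFun_increments_of_antitone {u : ℕ → ℝ} (hu : Antitone u) (hu0 : ∀ n, 0 ≤ u n) :
    iIndepFun (fun n ω => X.S (u n) ω - X.S (u (n + 1)) ω) ℙ := by
  rw [iIndepFun_iff_finset]
  intro s
  obtain ⟨N, hN⟩ : ∃ N, ∀ n ∈ s, n ≤ N := ⟨s.sup id, fun n hn => Finset.le_sup (f := id) hn⟩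
  have hind := X.indep_increments (N + 1) (fun i => u (N + 1 - i))
    (fun i j hij => hu (by simp only [Fin.le_def] at hij; omega)) fun i => hu0 _
  let g : s → Fin (N + 1) := fun n => ⟨N - n, by omega⟩
  have hg : g.Injective := fun m n hmn => by
    have := hN m m.2; have := hN n n.2
    exact Subtype.ext (by simp only [g, Fin.mk.injEq] at hmn; omega)
  convert hind.precomp hg using 1
  ext n ω
  have := hN n n.2
  simp only [Finset.restrict, g, Fin.val_succ, Fin.val_castSucc]
  congr 3 <;> omega

theorem ae_frequently_lt_increment (hα : α ≠ 0) {u : ℕ → ℝ} (hu : StrictAnti u)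
    (hu0 : ∀ n, 0 ≤ u n) {c : ℝ} (hc : c < 1) :
    ∀ᵐ ω, ∃ᶠ n in atTop, c * (u n - u (n + 1)) ^ α⁻¹ < X.S (u n) ω - X.S (u (n + 1)) ω := by
  have hD : ∀ n, Measurable fun ω => X.S (u n) ω - X.S (u (n + 1)) ω :=
    fun n => (X.measurable _).sub (X.measurable _)
  have hp : 0 < 1 - Real.exp (c - 1) := sub_pos.2 (Real.exp_lt_one_iff.2 (by linarith))
  refine ae_frequently_mem_of_iIndepSet (fun n => hD n measurableSet_Ioi)
    ((X.iIndepFun_increments_of_antitone hu.antitone hu0).iIndepSet_preimage hD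
      fun n => measurableSet_Ioi) (top_unique ?_)
  calc ∞ = ∑' _ : ℕ, ENNReal.ofReal (1 - Real.exp (c - 1)) :=
        (ENNReal.tsum_const_eq_top_of_ne_zero (ENNReal.ofReal_pos.2 hp).ne').symm
    _ ≤ _ := ENNReal.tsum_le_tsum fun n => ENNReal.ofReal_le_of_le_toReal
        (X.one_sub_exp_le_measureReal_increment hα (hu0 _) (hu n.lt_succ_self) c)

end StableSubordinator

/-- If `θ ∈ [1/α, ∞)`, then almost surely, for every `T > 0`, the Lebesgue–Stieltjes
integral `∫_0^T t^(-θ) dS_t` is infinite. -/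
theorem singular_integral_blow_up {Ω : Type*} [MeasureSpace Ω]
    [IsProbabilityMeasure (ℙ : Measure Ω)] {α : ℝ} (hα : α ∈ Set.Ioo (0 : ℝ) 1)
    (X : StableSubordinator Ω α) {θ : ℝ} (hθ : 1 / α ≤ θ) :
    ∀ᵐ ω : Ω, ∀ T : ℝ, 0 < T →
      ∫⁻ t in Set.Ioc (0 : ℝ) T, ENNReal.ofReal (t ^ (-θ))
        ∂(pathMeasure (fun t => X.S t ω)) = ∞ := by
  have hθ0 : 0 ≤ θ := (one_div_pos.2 hα.1).le.trans hθ
  set u : ℕ → ℝ := fun n => 2⁻¹ ^ n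
  have hu : StrictAnti u := pow_right_strictAnti₀ (by norm_num) (by norm_num)
  have hu_pos : ∀ n, 0 < u n := fun n => by positivity
  filter_upwards [X.path, X.ae_frequently_lt_increment hα.1.ne' hu (fun n => (hu_pos n).le)
    (c := 2⁻¹) (by norm_num)] with ω hpath hfreq T hT
  refine setLIntegral_Ioc_zero_eq_top_of_frequently_le
    (fun a ha b _ hab =>
      ENNReal.ofReal_le_ofReal (Real.rpow_le_rpow_of_nonpos ha hab (by linarith)))
    hu.antitone hu_pos (tendsto_pow_atTop_nhds_zero_of_lt_one (by norm_num) (by norm_num))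
    (C := ENNReal.ofReal (2⁻¹ * 2⁻¹ ^ α⁻¹)) (ENNReal.ofReal_pos.2 (by positivity)).ne'
    (hfreq.mono fun n hn => ?_) hT
  have hhalf : u n - u (n + 1) = 2⁻¹ * u n := by simp only [u, pow_succ]; ring
  have hscale : (2⁻¹ : ℝ) ^ α⁻¹ ≤ u n ^ (-θ) * (u n - u (n + 1)) ^ α⁻¹ := by
    rw [hhalf]
    exact rpow_le_rpow_neg_mul_mul_rpow (hu_pos n) (pow_le_one₀ (by norm_num) (by norm_num))
      (by rwa [one_div] at hθ) (by norm_num)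
  rw [pathMeasure_Ioc hpath, ← ENNReal.ofReal_mul (by positivity)]
  refine ENNReal.ofReal_le_ofReal ?_
  calc 2⁻¹ * 2⁻¹ ^ α⁻¹ ≤ u n ^ (-θ) * (2⁻¹ * (u n - u (n + 1)) ^ α⁻¹) := by
        rw [mul_left_comm]; gcongr
    _ ≤ u n ^ (-θ) * (X.S (u n) ω - X.S (u (n + 1)) ω) := by gcongr
end

section
/- Let S be an α-stable subordinator with index α ∈ (0,1), let λ > 0, and let p ∈ (0, α). Then for every T > 0, E[(∫_0^T e^{-λ(T−t)} dS_t)^p] ≤ (e^{pλ} / (e^{pλ} − 1)) · E[S_1^p]. -/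
open MeasureTheory ProbabilityTheory Filter Set
open scoped ENNReal NNReal Topology

/-! The interval `(0, T]` is covered by the unit blocks `(T - k - 1, T - k]`, on which the
integrand is at most `e^{-λk}`. Since `x ↦ x ^ p` is subadditive for `p ≤ 1`, the `p`-th power of
the integral is at most `∑ₖ e^{-pλk} (S_{T-k} - S_{T-k-1}) ^ p`. By stationarity of the increments
(and monotonicity of the paths for the blocks reaching below `0`) each increment has `p`-th moment
at most `E[S_1 ^ p]`, and the geometric series sums to `e^{pλ} / (e^{pλ} - 1)`. -/

theorem ENNReal.rpow_tsum_le_tsum_rpow {ι : Type*} (f : ι → ℝ≥0∞) {p : ℝ} (hp0 : 0 < p)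
    (hp1 : p ≤ 1) : (∑' i, f i) ^ p ≤ ∑' i, f i ^ p := by
  rw [ENNReal.tsum_eq_iSup_sum, (ENNReal.monotone_rpow_of_nonneg hp0.le).map_iSup_of_continuousAt
    (ENNReal.continuous_rpow_const.continuousAt) (ENNReal.zero_rpow_of_pos hp0)]
  exact iSup_le fun s => (Finset.le_sum_of_subadditive (· ^ p) (ENNReal.zero_rpow_of_pos hp0).le
    (fun a b => ENNReal.rpow_add_le_add_rpow a b hp0.le hp1) s f).trans (ENNReal.sum_le_tsum s)

theorem ENNReal.tsum_ofReal_exp_neg_pow {r : ℝ} (hr : 0 < r) :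
    ∑' k : ℕ, ENNReal.ofReal (Real.exp (-r)) ^ k =
      ENNReal.ofReal (Real.exp r / (Real.exp r - 1)) := by
  have hpos : 0 < 1 - Real.exp (-r) := sub_pos.2 (Real.exp_lt_one_iff.2 (neg_neg_of_pos hr))
  rw [ENNReal.tsum_geometric, ← ENNReal.ofReal_one, ← ENNReal.ofReal_sub _ (Real.exp_nonneg _),
    ← ENNReal.ofReal_inv_of_pos hpos, Real.exp_neg]
  congr 1
  field_simp

theorem iUnion_Ioc_sub_natCast_succ {α : Type*} [Field α] [LinearOrder α] [IsStrictOrderedRing α]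
    [FloorSemiring α] (T : α) : ⋃ k : ℕ, Ioc (T - (k + 1)) (T - k) = Iic T := by
  ext t
  simp only [mem_iUnion, mem_Ioc, mem_Iic]
  constructor
  · rintro ⟨k, -, htk⟩
    exact htk.trans (sub_le_self _ k.cast_nonneg)
  · intro ht
    have h0 : 0 ≤ T - t := sub_nonneg.2 ht
    refine ⟨⌊T - t⌋₊, ?_, ?_⟩
    · linarith [Nat.lt_floor_add_one (T - t)]
    · linarith [Nat.floor_le h0]

theorem StieltjesFunction.setLIntegral_Iic_exp_le_tsum (f : StieltjesFunction ℝ) {lam : ℝ}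
    (hlam : 0 ≤ lam) (T : ℝ) :
    ∫⁻ t in Iic T, ENNReal.ofReal (Real.exp (-lam * (T - t))) ∂f.measure ≤
      ∑' k : ℕ, ENNReal.ofReal (Real.exp (-lam)) ^ k *
        ENNReal.ofReal (f (T - k) - f (T - (k + 1))) := by
  rw [← iUnion_Ioc_sub_natCast_succ]
  refine (lintegral_iUnion_le _ _).trans (ENNReal.tsum_le_tsum fun k => ?_)
  rw [← f.measure_Ioc, ← setLIntegral_const]
  refine setLIntegral_mono measurable_const fun t ht => ?_
  rw [← ENNReal.ofReal_pow (Real.exp_nonneg _), ← Real.exp_nat_mul]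
  refine ENNReal.ofReal_le_ofReal (Real.exp_le_exp.2 ?_)
  nlinarith [ht.2]

theorem StieltjesFunction.rpow_setLIntegral_Iic_exp_le_tsum (f : StieltjesFunction ℝ) {lam p : ℝ}
    (hlam : 0 ≤ lam) (hp0 : 0 < p) (hp1 : p ≤ 1) (T : ℝ) :
    (∫⁻ t in Iic T, ENNReal.ofReal (Real.exp (-lam * (T - t))) ∂f.measure) ^ p ≤
      ∑' k : ℕ, ENNReal.ofReal (Real.exp (-(p * lam))) ^ k *
        ENNReal.ofReal (f (T - k) - f (T - (k + 1))) ^ p := by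
  have hexp : ENNReal.ofReal (Real.exp (-lam)) ^ p = ENNReal.ofReal (Real.exp (-(p * lam))) := by
    rw [ENNReal.ofReal_rpow_of_nonneg (Real.exp_nonneg _) hp0.le, ← Real.exp_mul]
    ring_nf
  calc _ ≤ (∑' k : ℕ, ENNReal.ofReal (Real.exp (-lam)) ^ k *
          ENNReal.ofReal (f (T - k) - f (T - (k + 1)))) ^ p :=
        ENNReal.rpow_le_rpow (f.setLIntegral_Iic_exp_le_tsum hlam T) hp0.le
    _ ≤ _ := ENNReal.rpow_tsum_le_tsum_rpow _ hp0 hp1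
    _ = _ := by
      simp_rw [ENNReal.mul_rpow_of_nonneg _ _ hp0.le, ← ENNReal.rpow_natCast,
        ← ENNReal.rpow_mul, mul_comm _ p, ENNReal.rpow_mul, hexp]

theorem pathMeasure_eq_measure {f : ℝ → ℝ} (hf : Monotone f)
    (hf' : ∀ x : ℝ, ContinuousWithinAt f (Ici x) x) :
    pathMeasure f = StieltjesFunction.measure ⟨f, hf, hf'⟩ := by
  rw [pathMeasure, dif_pos ⟨hf, hf'⟩]

namespace StableSubordinator

variable {Ω : Type*} [MeasureSpace Ω] [IsProbabilityMeasure (ℙ : Measure Ω)] {α : ℝ}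
  (X : StableSubordinator Ω α)

theorem ae_monotone : ∀ᵐ ω, Monotone (fun t => X.S t ω) :=
  X.path.mono fun _ h => h.1

theorem ae_nonneg (t : ℝ) : ∀ᵐ ω, 0 ≤ X.S t ω := by
  filter_upwards [X.ae_monotone] with ω hω
  simpa [X.zero_of_nonpos (min t 0) (min_le_right t 0) ω] using hω (min_le_left t 0)

theorem lintegral_comp_increment_le {s t : ℝ} (hst : s ≤ t) {g : ℝ → ℝ≥0∞} (hg : Monotone g) :
    ∫⁻ ω, g (X.S t ω - X.S s ω) ≤ ∫⁻ ω, g (X.S (t - s) ω) := by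
  by_cases hs : 0 ≤ s
  · refine le_of_eq ?_
    rw [← lintegral_map (g := fun ω => X.S t ω - X.S s ω) hg.measurable
      ((X.measurable t).sub (X.measurable s)),
      X.stationary_increments s t hs hst, lintegral_map hg.measurable (X.measurable _)]
  · refine lintegral_mono_ae ?_
    filter_upwards [X.ae_monotone] with ω hω
    rw [X.zero_of_nonpos s (not_le.1 hs).le ω, sub_zero]
    exact hg (hω (by linarith))

end StableSubordinator

/-- For `λ > 0` and `p ∈ (0, α)`, for every `T > 0`,
`E[(∫_0^T e^(-λ(T-t)) dS_t)^p] ≤ e^(pλ) / (e^(pλ) - 1) · E[S_1^p]`. -/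
theorem exponential_integral_moment_bound {Ω : Type*} [MeasureSpace Ω]
    [IsProbabilityMeasure (ℙ : Measure Ω)] {α : ℝ} (hα : α ∈ Set.Ioo (0 : ℝ) 1)
    (X : StableSubordinator Ω α) {lam p : ℝ} (hlam : 0 < lam) (hp : p ∈ Set.Ioo 0 α) :
    ∀ T : ℝ, 0 < T →
      ∫⁻ ω, (∫⁻ t in Set.Ioc (0 : ℝ) T, ENNReal.ofReal (Real.exp (-lam * (T - t)))
          ∂(pathMeasure (fun t => X.S t ω))) ^ p ∂ℙ ≤
        ENNReal.ofReal (Real.exp (p * lam) / (Real.exp (p * lam) - 1)) *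
          ∫⁻ ω, ENNReal.ofReal (X.S 1 ω ^ p) ∂ℙ := by
  intro T _
  have hp1 : p ≤ 1 := (hp.2.trans hα.2).le
  set q := ENNReal.ofReal (Real.exp (-(p * lam)))
  set D : ℕ → Ω → ℝ≥0∞ := fun k ω => ENNReal.ofReal (X.S (T - k) ω - X.S (T - (k + 1)) ω) ^ p
  have hD : ∀ k, Measurable (D k) := fun k =>
    ((X.measurable _).sub (X.measurable _)).ennreal_ofReal.pow_const p
  have hmono : Monotone fun x : ℝ => ENNReal.ofReal x ^ p :=
    (ENNReal.monotone_rpow_of_nonneg hp.1.le).comp ENNReal.ofReal_mono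
  calc _ ≤ ∫⁻ ω, ∑' k, q ^ k * D k ω := by
        refine lintegral_mono_ae ?_
        filter_upwards [X.path] with ω ⟨hmon, hcont⟩
        rw [pathMeasure_eq_measure hmon hcont]
        exact (ENNReal.rpow_le_rpow (lintegral_mono_set Ioc_subset_Iic_self) hp.1.le).trans
          (StieltjesFunction.rpow_setLIntegral_Iic_exp_le_tsum _ hlam.le hp.1 hp1 T)
    _ = ∑' k, q ^ k * ∫⁻ ω, D k ω := by
        rw [lintegral_tsum fun k => ((hD k).const_mul _).aemeasurable]
        exact tsum_congr fun k => lintegral_const_mul _ (hD k)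
    _ ≤ ∑' k, q ^ k * ∫⁻ ω, ENNReal.ofReal (X.S 1 ω) ^ p := by
        refine ENNReal.tsum_le_tsum fun k => mul_le_mul_right ?_ _
        have := X.lintegral_comp_increment_le (s := T - (k + 1)) (t := T - k) (by linarith) hmono
        rwa [show T - k - (T - (k + 1)) = 1 by ring] at this
    _ = _ := by
        rw [ENNReal.tsum_mul_right, ENNReal.tsum_ofReal_exp_neg_pow (mul_pos hp.1 hlam)]
        congr 1
        refine lintegral_congr_ae ?_
        filter_upwards [X.ae_nonneg 1] with ω hω
        exact ENNReal.ofReal_rpow_of_nonneg hω hp.1.le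
end
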